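/- For every non-root process u, every execution of Algorithm RSP contains at most n_maxCC + 1 u-segments, where n_maxCC is the maximum number of non-root processes in a connected component. -/
import Mathlib


open Classical

inductive RStatus : Type
  | I | C | EB | EF
deriving DecidableEq

inductive RRule : Type
  | RC | REB | REF | RI | RR
deriving DecidableEq

/-- A network: a finite simple graph with a distinguished root and
strictly positive symmetric edge weights. -/
structure Network (V : Type) [Fintype V] [DecidableEq V] where
  G : SimpleGraph V
  r : V
  w : V → V → ℝ
  w_symm : ∀ u v : V, w u v = w v u
  w_pos : ∀ u v : V, G.Adj u v → 0 < w u v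

/-- A configuration: each process has a status, a parent pointer and a distance value. -/
structure Config (V : Type) where
  st : V → RStatus
  par : V → V
  d : V → ℝ

variable {V : Type} [Fintype V] [DecidableEq V]

/-- The root's variables are constants: status C and distance 0. -/
def RootConst (N : Network V) (γ : Config V) : Prop :=
  γ.st N.r = RStatus.C ∧ γ.d N.r = 0

/-- v ∈ children(u). -/
def childOf (N : Network V) (γ : Config V) (u v : V) : Prop :=
  N.G.Adj u v ∧ γ.st u ≠ RStatus.I ∧ γ.st v ≠ RStatus.I ∧ γ.par v = u ∧
    γ.d v ≥ γ.d u + N.w v u ∧ (γ.st v = γ.st u ∨ γ.st u = RStatus.EB)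

/-- u is an abnormal root. -/
def abRoot (N : Network V) (γ : Config V) (u : V) : Prop :=
  u ≠ N.r ∧ γ.st u ≠ RStatus.I ∧
    (¬ N.G.Adj u (γ.par u) ∨ γ.st (γ.par u) = RStatus.I ∨
     γ.d u < γ.d (γ.par u) + N.w u (γ.par u) ∨
     (γ.st u ≠ γ.st (γ.par u) ∧ γ.st (γ.par u) ≠ RStatus.EB))

def PReset (N : Network V) (γ : Config V) (u : V) : Prop :=
  γ.st u = RStatus.EF ∧ abRoot N γ u

def PCorrection (N : Network V) (γ : Config V) (u : V) : Prop :=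
  ∃ v : V, N.G.Adj u v ∧ γ.st v = RStatus.C ∧ γ.d v + N.w u v < γ.d u

def guardRC (N : Network V) (γ : Config V) (u : V) : Prop :=
  u ≠ N.r ∧ γ.st u = RStatus.C ∧ PCorrection N γ u

def guardREB (N : Network V) (γ : Config V) (u : V) : Prop :=
  u ≠ N.r ∧ γ.st u = RStatus.C ∧ ¬ PCorrection N γ u ∧
    (abRoot N γ u ∨ γ.st (γ.par u) = RStatus.EB)

def guardREF (N : Network V) (γ : Config V) (u : V) : Prop :=
  u ≠ N.r ∧ γ.st u = RStatus.EB ∧ ∀ v : V, childOf N γ u v → γ.st v = RStatus.EF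

def guardRI (N : Network V) (γ : Config V) (u : V) : Prop :=
  u ≠ N.r ∧ PReset N γ u ∧ ∀ v : V, N.G.Adj u v → γ.st v ≠ RStatus.C

def guardRR (N : Network V) (γ : Config V) (u : V) : Prop :=
  u ≠ N.r ∧ (PReset N γ u ∨ γ.st u = RStatus.I) ∧
    ∃ v : V, N.G.Adj u v ∧ γ.st v = RStatus.C

/-- The effect of the macro computePath at u in the step γ → γ'. -/
def ComputePath (N : Network V) (γ γ' : Config V) (u : V) : Prop :=
  N.G.Adj u (γ'.par u) ∧ γ.st (γ'.par u) = RStatus.C ∧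
  (∀ v : V, N.G.Adj u v → γ.st v = RStatus.C →
      γ.d (γ'.par u) + N.w u (γ'.par u) ≤ γ.d v + N.w u v) ∧
  γ'.d u = γ.d (γ'.par u) + N.w u (γ'.par u) ∧ γ'.st u = RStatus.C

/-- u executes the given rule during the step γ → γ'. -/
def ExecRule (N : Network V) (γ γ' : Config V) (u : V) : RRule → Prop
  | RRule.RC => guardRC N γ u ∧ ComputePath N γ γ' u
  | RRule.REB => guardREB N γ u ∧ γ'.st u = RStatus.EB ∧ γ'.par u = γ.par u ∧ γ'.d u = γ.d u
  | RRule.REF => guardREF N γ u ∧ γ'.st u = RStatus.EF ∧ γ'.par u = γ.par u ∧ γ'.d u = γ.d u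
  | RRule.RI => guardRI N γ u ∧ γ'.st u = RStatus.I ∧ γ'.par u = γ.par u ∧ γ'.d u = γ.d u
  | RRule.RR => guardRR N γ u ∧ ComputePath N γ γ' u

def EnabledAt (N : Network V) (γ : Config V) (u : V) : Prop :=
  guardRC N γ u ∨ guardREB N γ u ∨ guardREF N γ u ∨ guardRI N γ u ∨ guardRR N γ u

/-- A step of the distributed (unfair) daemon: a nonempty set of enabled processes
each atomically executes one of its enabled rules; other processes are unchanged. -/
def Step (N : Network V) (γ γ' : Config V) : Prop :=
  ∃ S : Set V, S.Nonempty ∧ (∀ u ∈ S, ∃ ρ : RRule, ExecRule N γ γ' u ρ) ∧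
    ∀ u : V, u ∉ S → γ'.st u = γ.st u ∧ γ'.par u = γ.par u ∧ γ'.d u = γ.d u

def Terminal (N : Network V) (γ : Config V) : Prop :=
  ∀ u : V, ¬ EnabledAt N γ u

/-- Weight of a walk. -/
noncomputable def walkWeight (N : Network V) {u v : V} (p : N.G.Walk u v) : ℝ :=
  (p.darts.map (fun e => N.w e.toProd.1 e.toProd.2)).sum

/-- x is the weighted distance from u to v in the graph. -/
def IsWDistBetween (N : Network V) (u v : V) (x : ℝ) : Prop :=
  (∃ p : N.G.Walk u v, walkWeight N p = x) ∧ ∀ p : N.G.Walk u v, x ≤ walkWeight N p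

/-- x is the weighted distance d(u,r). -/
def IsWDist (N : Network V) (u : V) (x : ℝ) : Prop :=
  IsWDistBetween N u N.r x

/-- k is the hop-distance between u and v: the minimum number of edges
of a minimum-weight path from u to v. -/
def IsHopDist (N : Network V) (u v : V) (k : ℕ) : Prop :=
  (∃ p : N.G.Walk u v, p.length = k ∧ ∀ q : N.G.Walk u v, walkWeight N p ≤ walkWeight N q) ∧
  (∀ p : N.G.Walk u v, (∀ q : N.G.Walk u v, walkWeight N p ≤ walkWeight N q) → k ≤ p.length)

/-- Legitimate state of a process. -/
def LegitState (N : Network V) (γ : Config V) (u : V) : Prop :=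
  u = N.r ∨
  (N.G.Reachable u N.r ∧ γ.st u = RStatus.C ∧ IsWDist N u (γ.d u) ∧
     N.G.Adj u (γ.par u) ∧ γ.d u = γ.d (γ.par u) + N.w u (γ.par u)) ∨
  (¬ N.G.Reachable u N.r ∧ γ.st u = RStatus.I)

def Legitimate (N : Network V) (γ : Config V) : Prop :=
  ∀ u : V, LegitState N γ u

/-- An execution: an infinite sequence of configurations (stuttering once terminal),
all respecting the root constants, consecutive ones related by steps. -/
def IsExec (N : Network V) (e : ℕ → Config V) : Prop :=
  (∀ i : ℕ, RootConst N (e i)) ∧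
  ∀ i : ℕ, Step N (e i) (e (i+1)) ∨ (Terminal N (e i) ∧ e (i+1) = e i)

/-- u executes some rule at step j of execution e. -/
def ExecAt (N : Network V) (e : ℕ → Config V) (j : ℕ) (u : V) : Prop :=
  ∃ ρ : RRule, ExecRule N (e j) (e (j+1)) u ρ

/-- u executes computePath (rule R_C or R_R) at step j. -/
def CPExec (N : Network V) (e : ℕ → Config V) (j : ℕ) (u : V) : Prop :=
  ExecRule N (e j) (e (j+1)) u RRule.RC ∨ ExecRule N (e j) (e (j+1)) u RRule.RR

def AliveAbRoot (N : Network V) (γ : Config V) (u : V) : Prop :=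
  abRoot N γ u ∧ γ.st u ≠ RStatus.EF

/-- Step j is a u-segment break: some non-root process of V_u ceases to be
an alive abnormal root during step j. -/
def SegBreak (N : Network V) (e : ℕ → Config V) (u : V) (j : ℕ) : Prop :=
  ∃ v : V, v ≠ N.r ∧ N.G.Reachable v u ∧
    AliveAbRoot N (e j) v ∧ ¬ AliveAbRoot N (e (j+1)) v

/-- n_maxCC: the maximum number of non-root processes in a connected component. -/
noncomputable def nmaxCC (N : Network V) : ℕ :=
  sSup {k : ℕ | ∃ v : V, k = {x : V | x ≠ N.r ∧ N.G.Reachable x v}.ncard}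

/-- The interval of steps [s, t) is a u-segment of the execution e
(t = ⊤ encodes a final, unbroken segment). -/
def IsSegment (N : Network V) (e : ℕ → Config V) (u : V) (s : ℕ) (t : ℕ∞) : Prop :=
  (s : ℕ∞) < t ∧ (s = 0 ∨ SegBreak N e u (s-1)) ∧
  (∀ j : ℕ, s ≤ j → ((j : ℕ∞) + 1 < t) → ¬ SegBreak N e u j) ∧
  (∀ m : ℕ, t = (m : ℕ∞) → SegBreak N e u (m-1))

/-- A causal chain of k+1 actions a_1,…,a_{k+1} in the window [s,t):
a_{i} occurs at time τ i, is a computePath execution by process p (i+1)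
setting its parent to p i; a_1 occurs no later than any action of p 0,
and each a_{i+1} occurs after a_i but no later than the next action of a_i's executor. -/
structure IsCausalChain (N : Network V) (e : ℕ → Config V) (s : ℕ) (t : ℕ∞)
    (k : ℕ) (τ : Fin (k+1) → ℕ) (p : Fin (k+2) → V) : Prop where
  mono : StrictMono τ
  lb : ∀ i : Fin (k+1), s ≤ τ i
  ub : ∀ i : Fin (k+1), (τ i : ℕ∞) < t
  cp : ∀ i : Fin (k+1), CPExec N e (τ i) (p i.succ) ∧ (e (τ i + 1)).par (p i.succ) = p i.castSucc
  root_first : ∀ j : ℕ, s ≤ j → j < τ 0 → ¬ ExecAt N e j (p 0)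
  between : ∀ i : Fin k, ∀ j : ℕ, τ i.castSucc < j → j < τ i.succ →
      ¬ ExecAt N e j (p i.castSucc.succ)

/-- A maximal causal chain: a causal chain that cannot be extended by a further action. -/
def IsMaxCausalChain (N : Network V) (e : ℕ → Config V) (s : ℕ) (t : ℕ∞)
    (k : ℕ) (τ : Fin (k+1) → ℕ) (p : Fin (k+2) → V) : Prop :=
  IsCausalChain N e s t k τ p ∧
  ¬ ∃ (j : ℕ) (v : V), τ (Fin.last k) < j ∧ (j : ℕ∞) < t ∧ CPExec N e j v ∧
      (e (j+1)).par v = p (Fin.last (k+1)) ∧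
      ∀ j' : ℕ, τ (Fin.last k) < j' → j' < j → ¬ ExecAt N e j' (p (Fin.last (k+1)))

/-- S_{seg,v}: the set of distance values produced by actions of maximal
causal chains rooted at v of the segment [s,t). -/
def SSeg (N : Network V) (e : ℕ → Config V) (s : ℕ) (t : ℕ∞) (v : V) : Set ℝ :=
  {x : ℝ | ∃ (k : ℕ) (τ : Fin (k+1) → ℕ) (p : Fin (k+2) → V),
      IsMaxCausalChain N e s t k τ p ∧ p 0 = v ∧
      ∃ i : Fin (k+1), x = (e (τ i + 1)).d (p i.succ)}

def Neutralized (N : Network V) (e : ℕ → Config V) (j : ℕ) (u : V) : Prop :=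
  EnabledAt N (e j) u ∧ ¬ EnabledAt N (e (j+1)) u

/-- Every process enabled at time s executes or is neutralized before time t. -/
def CompletesRound (N : Network V) (e : ℕ → Config V) (s t : ℕ) : Prop :=
  s ≤ t ∧ ∀ u : V, EnabledAt N (e s) u →
    ∃ j : ℕ, s ≤ j ∧ j < t ∧ (ExecAt N e j u ∨ Neutralized N e j u)

/-- roundEnd e k: the time at which the k-th round ends (the beginning of round k+1). -/
noncomputable def roundEnd (N : Network V) (e : ℕ → Config V) : ℕ → ℕ
  | 0 => 0
  | k+1 => sInf {t : ℕ | CompletesRound N e (roundEnd N e k) t}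

/-- b 0, b 1, …, b k is a branch: b 0 is the root r or an abnormal root,
and each b (i+1) is a child of b i; b i is at depth i+1. -/
def IsBranch (N : Network V) (γ : Config V) (k : ℕ) (b : Fin (k+1) → V) : Prop :=
  (b 0 = N.r ∨ abRoot N γ (b 0)) ∧ ∀ i : Fin k, childOf N γ (b i.castSucc) (b i.succ)

/-- Membership in the regular language (R_I + ε)(R_R + ε)R_C*(R_EB + ε)(R_EF + ε). -/
def InRSPLang (l : List RRule) : Prop :=
  ∃ a b c d f : List RRule, l = a ++ b ++ c ++ d ++ f ∧
    (a = [] ∨ a = [RRule.RI]) ∧ (b = [] ∨ b = [RRule.RR]) ∧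
    (∀ x ∈ c, x = RRule.RC) ∧ (d = [] ∨ d = [RRule.REB]) ∧ (f = [] ∨ f = [RRule.REF])

lemma cp_lt {N : Network V} {γ γ' : Config V} {p : V} (hcp : ComputePath N γ γ' p)
    (hpc : PCorrection N γ p) : γ'.d p < γ.d p := by
  obtain ⟨x, hadj, hstx, hx⟩ := hpc
  obtain ⟨_, _, hmin, hd, _⟩ := hcp
  calc γ'.d p = γ.d (γ'.par p) + N.w p (γ'.par p) := hd
    _ ≤ γ.d x + N.w p x := hmin x hadj hstx
    _ < γ.d p := hx

lemma step_no_new {N : Network V} {γ γ' : Config V} (h : Step N γ γ') (v : V)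
    (hv : ¬ AliveAbRoot N γ v) : ¬ AliveAbRoot N γ' v := by
  obtain ⟨S, hSne, hexec, hfix⟩ := h
  rintro ⟨⟨hvr, hstI', hdisj⟩, hEF'⟩
  by_cases hvS : v ∈ S
  · obtain ⟨ρ, hρ⟩ := hexec v hvS
    cases ρ with
    | RC =>
      obtain ⟨⟨_, hstC, hpc⟩, hadj, hstp, hmin, hd, hst⟩ := hρ
      set p := γ'.par v with hp
      by_cases hpS : p ∈ S
      · obtain ⟨ρ', hρ'⟩ := hexec p hpS
        cases ρ' with
        | RC =>
          obtain ⟨⟨_, _, hpc'⟩, hcp'⟩ := hρ'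
          have hdp : γ'.d p < γ.d p := cp_lt hcp' hpc'
          have h1 : ¬ (γ'.d v < γ'.d p + N.w v p) := by
            rw [hd]; linarith
          rcases hdisj with h | h | h | ⟨h2, h3⟩
          · exact h hadj
          · rw [hcp'.2.2.2.2] at h; exact absurd h (by decide)
          · exact h1 h
          · exact h2 (by rw [hst, hcp'.2.2.2.2])
        | REB =>
          obtain ⟨hg', hst', hpar', hd'⟩ := hρ'
          rcases hdisj with h | h | h | ⟨h2, h3⟩
          · exact h hadj
          · rw [hst'] at h; exact absurd h (by decide)
          · rw [hd, hd'] at h; linarith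
          · exact h3 hst'
        | REF =>
          obtain ⟨⟨_, hstEB, _⟩, _⟩ := hρ'
          rw [hstp] at hstEB; exact absurd hstEB (by decide)
        | RI =>
          obtain ⟨⟨_, ⟨hstEF, _⟩, _⟩, _⟩ := hρ'
          rw [hstp] at hstEF; exact absurd hstEF (by decide)
        | RR =>
          obtain ⟨⟨_, hg, _⟩, _⟩ := hρ'
          rcases hg with ⟨hstEF, _⟩ | hstI <;> rw [hstp] at * <;> simp_all
      · have hfp := hfix p hpS
        rcases hdisj with h | h | h | ⟨h2, h3⟩
        · exact h hadj
        · rw [hfp.1, hstp] at h; exact absurd h (by decide)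
        · rw [hd, hfp.2.2] at h; linarith
        · exact h2 (by rw [hst, hfp.1, hstp])
    | REB =>
      obtain ⟨⟨_, hstC, hnpc, hg⟩, hst', hpar', hd'⟩ := hρ
      have hnab : ¬ abRoot N γ v := fun hab => hv ⟨hab, by rw [hstC]; decide⟩
      have hpEB : γ.st (γ.par v) = RStatus.EB := by
        rcases hg with hab | h
        · exact absurd hab hnab
        · exact h
      set p := γ.par v with hp
      unfold abRoot at hnab
      push_neg at hnab
      obtain ⟨hadj, hpI, hdge, _⟩ := hnab hvr (by rw [hstC]; decide)
      by_cases hpS : p ∈ S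
      · obtain ⟨ρ', hρ'⟩ := hexec p hpS
        cases ρ' with
        | RC => obtain ⟨⟨_, h', _⟩, _⟩ := hρ'; rw [hpEB] at h'; exact absurd h' (by decide)
        | REB => obtain ⟨⟨_, h', _⟩, _⟩ := hρ'; rw [hpEB] at h'; exact absurd h' (by decide)
        | RI => obtain ⟨⟨_, ⟨h', _⟩, _⟩, _⟩ := hρ'; rw [hpEB] at h'; exact absurd h' (by decide)
        | RR =>
          obtain ⟨⟨_, hg', _⟩, _⟩ := hρ'
          rcases hg' with ⟨h', _⟩ | h' <;> rw [hpEB] at h' <;> exact absurd h' (by decide)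
        | REF =>
          obtain ⟨⟨_, _, hch⟩, _⟩ := hρ'
          have := hch v ⟨hadj.symm, by rw [hpEB]; decide, by rw [hstC]; decide, rfl,
            hdge, Or.inr hpEB⟩
          rw [hstC] at this; exact absurd this (by decide)
      · have hfp := hfix p hpS
        rw [hpar'] at hdisj
        rcases hdisj with h | h | h | ⟨h2, h3⟩
        · exact h hadj
        · rw [hfp.1, hpEB] at h; exact absurd h (by decide)
        · rw [hd', hfp.2.2] at h; linarith
        · exact h3 (by rw [hfp.1, hpEB])
    | REF =>
      obtain ⟨_, hst', _⟩ := hρ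
      exact hEF' hst'
    | RI =>
      obtain ⟨_, hst', _⟩ := hρ
      exact hstI' hst'
    | RR =>
      obtain ⟨⟨_, hg, _⟩, hadj, hstp, hmin, hd, hst⟩ := hρ
      set p := γ'.par v with hp
      by_cases hpS : p ∈ S
      · obtain ⟨ρ', hρ'⟩ := hexec p hpS
        cases ρ' with
        | RC =>
          obtain ⟨⟨_, _, hpc'⟩, hcp'⟩ := hρ'
          have hdp : γ'.d p < γ.d p := cp_lt hcp' hpc'
          rcases hdisj with h | h | h | ⟨h2, h3⟩
          · exact h hadj
          · rw [hcp'.2.2.2.2] at h; exact absurd h (by decide)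
          · rw [hd] at h; linarith
          · exact h2 (by rw [hst, hcp'.2.2.2.2])
        | REB =>
          obtain ⟨hg', hst', hpar', hd'⟩ := hρ'
          rcases hdisj with h | h | h | ⟨h2, h3⟩
          · exact h hadj
          · rw [hst'] at h; exact absurd h (by decide)
          · rw [hd, hd'] at h; linarith
          · exact h3 hst'
        | REF =>
          obtain ⟨⟨_, hstEB, _⟩, _⟩ := hρ'
          rw [hstp] at hstEB; exact absurd hstEB (by decide)
        | RI =>
          obtain ⟨⟨_, ⟨hstEF, _⟩, _⟩, _⟩ := hρ'
          rw [hstp] at hstEF; exact absurd hstEF (by decide)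
        | RR =>
          obtain ⟨⟨_, hg', _⟩, _⟩ := hρ'
          rcases hg' with ⟨hstEF, _⟩ | hstI <;> rw [hstp] at * <;> simp_all
      · have hfp := hfix p hpS
        rcases hdisj with h | h | h | ⟨h2, h3⟩
        · exact h hadj
        · rw [hfp.1, hstp] at h; exact absurd h (by decide)
        · rw [hd, hfp.2.2] at h; linarith
        · exact h2 (by rw [hst, hfp.1, hstp])
  · have hfv := hfix v hvS
    by_cases hEF : γ.st v = RStatus.EF
    · exact hEF' (by rw [hfv.1, hEF])
    have hnab : ¬ abRoot N γ v := fun hab => hv ⟨hab, hEF⟩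
    unfold abRoot at hnab
    push_neg at hnab
    have hstI : γ.st v ≠ RStatus.I := by rw [← hfv.1]; exact hstI'
    obtain ⟨hadj, hpI, hdge, hstd⟩ := hnab hvr hstI
    set p := γ.par v with hp
    rw [hfv.2.1] at hdisj
    by_cases hpS : p ∈ S
    · obtain ⟨ρ', hρ'⟩ := hexec p hpS
      have hstd' : γ.st v = γ.st p ∨ γ.st p = RStatus.EB := by
        by_cases h : γ.st p = RStatus.EB
        · exact Or.inr h
        · exact Or.inl (by by_contra h2; exact h (hstd h2))
      cases ρ' with
      | RC =>
        obtain ⟨⟨_, hstC, hpc'⟩, hcp'⟩ := hρ'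
        have hdp : γ'.d p < γ.d p := cp_lt hcp' hpc'
        have hvC : γ.st v = RStatus.C := by
          rcases hstd' with h | h
          · rw [h, hstC]
          · rw [hstC] at h; exact absurd h (by decide)
        rcases hdisj with h | h | h | ⟨h2, h3⟩
        · exact h hadj
        · rw [hcp'.2.2.2.2] at h; exact absurd h (by decide)
        · rw [hfv.2.2] at h; linarith
        · exact h2 (by rw [hfv.1, hvC, hcp'.2.2.2.2])
      | REB =>
        obtain ⟨hg', hst', hpar', hd'⟩ := hρ'
        rcases hdisj with h | h | h | ⟨h2, h3⟩
        · exact h hadj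
        · rw [hst'] at h; exact absurd h (by decide)
        · rw [hfv.2.2, hd'] at h; linarith
        · exact h3 hst'
      | REF =>
        obtain ⟨⟨_, hstEB, hch⟩, _⟩ := hρ'
        have := hch v ⟨hadj.symm, by rw [hstEB]; decide, hstI, rfl, hdge,
          Or.inr hstEB⟩
        exact hEF this
      | RI =>
        obtain ⟨⟨_, ⟨hstEF, _⟩, _⟩, _⟩ := hρ'
        rcases hstd' with h | h
        · rw [hstEF] at h; exact hEF h
        · rw [hstEF] at h; exact absurd h (by decide)
      | RR =>
        obtain ⟨⟨_, hg', _⟩, _⟩ := hρ'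
        rcases hg' with ⟨hstEF, _⟩ | hstI2
        · rcases hstd' with h | h
          · rw [hstEF] at h; exact hEF h
          · rw [hstEF] at h; exact absurd h (by decide)
        · exact hpI hstI2
    · have hfp := hfix p hpS
      rcases hdisj with h | h | h | ⟨h2, h3⟩
      · exact h hadj
      · rw [hfp.1] at h; exact hpI h
      · rw [hfv.2.2, hfp.2.2] at h; linarith
      · rw [hfv.1, hfp.1] at h2
        rw [hfp.1] at h3
        exact h3 (hstd h2)

lemma exec_no_new {N : Network V} {e : ℕ → Config V} (he : IsExec N e) (v : V)
    {i j : ℕ} (hij : i ≤ j) (hv : ¬ AliveAbRoot N (e i) v) :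
    ¬ AliveAbRoot N (e j) v := by
  induction j, hij using Nat.le_induction with
  | base => exact hv
  | succ k hk ih =>
    rcases he.2 k with hs | ⟨_, hst⟩
    · exact step_no_new hs v ih
    · rw [hst]; exact ih

/-- every execution contains at most n_maxCC + 1 u-segments,
i.e., at most n_maxCC u-segment breaks. -/
theorem stmt6 (N : Network V) (e : ℕ → Config V) (he : IsExec N e)
    (u : V) (hu : u ≠ N.r) :
    {j : ℕ | SegBreak N e u j}.Finite ∧
    {j : ℕ | SegBreak N e u j}.ncard ≤ nmaxCC N := by
  classical
  set B := {j : ℕ | SegBreak N e u j} with hB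
  set f : ℕ → V := fun j => if h : SegBreak N e u j then h.choose else u with hf
  have hwit : ∀ j ∈ B, (f j ≠ N.r ∧ N.G.Reachable (f j) u) ∧
      AliveAbRoot N (e j) (f j) ∧ ¬ AliveAbRoot N (e (j+1)) (f j) := by
    intro j hj
    have hj' : SegBreak N e u j := hj
    simp only [hf, dif_pos hj']
    obtain ⟨h1, h2, h3, h4⟩ := hj'.choose_spec
    exact ⟨⟨h1, h2⟩, h3, h4⟩
  have hinj : Set.InjOn f B := by
    intro a ha b hb hab
    by_contra hne
    wlog hlt : a < b generalizing a b
    · exact this hb ha hab.symm (Ne.symm hne) (by omega)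
    have h1 := (hwit a ha).2.2
    have h2 := (hwit b hb).2.1
    rw [hab] at h1
    exact exec_no_new he (f b) (by omega : a + 1 ≤ b) h1 h2
  have hfin : B.Finite := Set.Finite.of_finite_image (Set.toFinite _) hinj
  refine ⟨hfin, ?_⟩
  have hsub : f '' B ⊆ {x : V | x ≠ N.r ∧ N.G.Reachable x u} := by
    rintro x ⟨j, hj, rfl⟩
    exact (hwit j hj).1
  have h1 : B.ncard = (f '' B).ncard := (Set.ncard_image_of_injOn hinj).symm
  have h2 : (f '' B).ncard ≤ {x : V | x ≠ N.r ∧ N.G.Reachable x u}.ncard :=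
    Set.ncard_le_ncard hsub (Set.toFinite _)
  have h3 : {x : V | x ≠ N.r ∧ N.G.Reachable x u}.ncard ≤ nmaxCC N := by
    apply le_csSup
    · refine ⟨Fintype.card V, ?_⟩
      rintro k ⟨v, rfl⟩
      calc {x : V | x ≠ N.r ∧ N.G.Reachable x v}.ncard
          ≤ (Set.univ : Set V).ncard := Set.ncard_le_ncard (Set.subset_univ _) (Set.toFinite _)
        _ = Fintype.card V := by rw [Set.ncard_univ, Nat.card_eq_fintype_card]
    · exact ⟨u, rfl⟩
  omega
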